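/- Let a, b, c be nonzero squarefree pairwise coprime integers such that the equation a·X₀² + b·X₁² + c·X₂² = 0 has a solution in integers (x₀, x₁, x₂) ≠ (0,0,0). Then there exists such a nonzero integer solution (x₀, x₁, x₂) additionally satisfying x₀² ≤ |b·c|, x₁² ≤ |a·c| and x₂² ≤ |a·b|. -/

import Mathlib

private lemma exists_reduced_pair (P R S : ℤ)
    (hpos : ∀ k c : ℤ, ¬(k = 0 ∧ c = 0) → 0 < P*k^2 + 2*R*(k*c) + S*c^2) :
    ∃ k₁ c₁ k₂ c₂ : ℤ, k₁*c₂ - k₂*c₁ = 1 ∧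
      P*k₁^2 + 2*R*(k₁*c₁) + S*c₁^2 ≤ P*k₂^2 + 2*R*(k₂*c₂) + S*c₂^2 ∧
      2*(P*(k₁*k₂) + R*(k₁*c₂+k₂*c₁) + S*(c₁*c₂)) ≤ P*k₁^2 + 2*R*(k₁*c₁) + S*c₁^2 ∧
      -(P*k₁^2 + 2*R*(k₁*c₁) + S*c₁^2) ≤ 2*(P*(k₁*k₂) + R*(k₁*c₂+k₂*c₁) + S*(c₁*c₂)) := by
  classical
  set Q : ℤ → ℤ → ℤ := fun k c => P*k^2 + 2*R*(k*c) + S*c^2 with hQ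
  set Bi : ℤ → ℤ → ℤ → ℤ → ℤ := fun k c k' c' => P*(k*k') + R*(k*c'+k'*c) + S*(c*c') with hBi
  have hne : ∀ k c k' c' : ℤ, k*c' - k'*c = 1 → ¬(k = 0 ∧ c = 0) := by
    rintro k c k' c' hd ⟨h1, h2⟩
    rw [h1, h2] at hd; simp at hd
  set T : Set ℕ := {m | ∃ k₁ c₁ k₂ c₂ : ℤ, k₁*c₂ - k₂*c₁ = 1 ∧ Q k₁ c₁ + Q k₂ c₂ = (m:ℤ)} with hT
  have hTne : T.Nonempty := by
    refine ⟨(Q 1 0 + Q 0 1).toNat, 1, 0, 0, 1, by ring, ?_⟩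
    have h1 : 0 < Q 1 0 := hpos 1 0 (by simp)
    have h2 : 0 < Q 0 1 := hpos 0 1 (by simp)
    rw [Int.toNat_of_nonneg (by linarith)]
  obtain ⟨m, hmT, hminT⟩ := (Nat.lt_wfRel.wf).has_min T hTne
  have hmain : ∀ k₁ c₁ k₂ c₂ : ℤ, k₁*c₂ - k₂*c₁ = 1 → Q k₁ c₁ + Q k₂ c₂ = (m:ℤ) →
      2*(Bi k₁ c₁ k₂ c₂) ≤ Q k₁ c₁ ∧ -(Q k₁ c₁) ≤ 2*(Bi k₁ c₁ k₂ c₂) := by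
    intro k₁ c₁ k₂ c₂ hdet hsum
    have hpos1 : 0 < Q k₁ c₁ := hpos _ _ (hne _ _ _ _ hdet)
    constructor
    · by_contra hcon
      push_neg at hcon
      have hd' : k₁*(c₂-c₁) - (k₂-k₁)*c₁ = 1 := by linear_combination hdet
      have hQ2' : Q (k₂-k₁) (c₂-c₁) = Q k₂ c₂ - 2*(Bi k₁ c₁ k₂ c₂) + Q k₁ c₁ := by
        simp only [hQ, hBi]; ring
      have hpos2' : 0 < Q (k₂-k₁) (c₂-c₁) := hpos _ _ (by
        rintro ⟨h1, h2⟩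
        rw [h1, h2] at hd'
        simp at hd')
      have hlt : Q k₁ c₁ + Q (k₂-k₁) (c₂-c₁) < (m:ℤ) := by
        rw [hQ2']; linarith
      have hmem : (Q k₁ c₁ + Q (k₂-k₁) (c₂-c₁)).toNat ∈ T := by
        refine ⟨k₁, c₁, k₂-k₁, c₂-c₁, hd', ?_⟩
        rw [Int.toNat_of_nonneg (by linarith)]
      refine hminT _ hmem ?_
      show (Q k₁ c₁ + Q (k₂-k₁) (c₂-c₁)).toNat < m
      omega
    · by_contra hcon
      push_neg at hcon
      have hd' : k₁*(c₂+c₁) - (k₂+k₁)*c₁ = 1 := by linear_combination hdet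
      have hQ2' : Q (k₂+k₁) (c₂+c₁) = Q k₂ c₂ + 2*(Bi k₁ c₁ k₂ c₂) + Q k₁ c₁ := by
        simp only [hQ, hBi]; ring
      have hpos2' : 0 < Q (k₂+k₁) (c₂+c₁) := hpos _ _ (by
        rintro ⟨h1, h2⟩
        rw [h1, h2] at hd'
        simp at hd')
      have hlt : Q k₁ c₁ + Q (k₂+k₁) (c₂+c₁) < (m:ℤ) := by
        rw [hQ2']; linarith
      have hmem : (Q k₁ c₁ + Q (k₂+k₁) (c₂+c₁)).toNat ∈ T := by
        refine ⟨k₁, c₁, k₂+k₁, c₂+c₁, hd', ?_⟩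
        rw [Int.toNat_of_nonneg (by linarith)]
      refine hminT _ hmem ?_
      show (Q k₁ c₁ + Q (k₂+k₁) (c₂+c₁)).toNat < m
      omega
  obtain ⟨k₁, c₁, k₂, c₂, hdet, hsum⟩ := hmT
  rcases le_total (Q k₁ c₁) (Q k₂ c₂) with hord | hord
  · obtain ⟨h1, h2⟩ := hmain k₁ c₁ k₂ c₂ hdet hsum
    exact ⟨k₁, c₁, k₂, c₂, hdet, hord, h1, h2⟩
  · have hdet' : k₂*(-c₁) - (-k₁)*c₂ = 1 := by linear_combination hdet
    have hsum' : Q k₂ c₂ + Q (-k₁) (-c₁) = (m:ℤ) := by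
      simp only [hQ] at hsum ⊢; linear_combination hsum
    obtain ⟨h1, h2⟩ := hmain k₂ c₂ (-k₁) (-c₁) hdet' hsum'
    refine ⟨k₂, c₂, -k₁, -c₁, hdet', ?_, ?_, ?_⟩
    · simp only [hQ] at hord ⊢; linarith [hord]  -- Q(-k₁)(-c₁) = Q k₁ c₁
    · simpa only [hBi] using h1
    · simpa only [hBi] using h2

private lemma int_dvd_two_iff (w : ℤ) : (2:ℤ) ∣ w ↔ (w : ZMod 2) = 0 := by
  rw [ZMod.intCast_zmod_eq_zero_iff_dvd]; norm_num

private lemma zmod2_cases : ∀ v : ZMod 2, v = 0 ∨ v = 1 := by decide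

private lemma zmod2_select : ∀ K₁ C₁ K₂ C₂ β : ZMod 2, K₁*C₂ - K₂*C₁ = 1 →
    (K₁ = 1 ∧ C₁ = β) ∨ (K₂ = 1 ∧ C₂ = β) ∨ (K₁ + K₂ = 1 ∧ C₁ + C₂ = β) := by decide

set_option maxHeartbeats 1600000 in
private lemma descent (a b C x y z : ℤ) (ha : 0 < a) (hb : 0 < b) (hC : 0 < C) (hz : 0 < z)
    (E : a*x^2 + b*y^2 = C*z^2)
    (hx2 : ¬ (2:ℤ) ∣ x)
    (cxz : IsCoprime x z) (cyz : IsCoprime y z)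
    (hb4 : ¬ ((2:ℤ)*2 ∣ b))
    (hmin : ∀ p q r : ℤ, a*p^2 + b*q^2 = C*r^2 → ¬(p = 0 ∧ q = 0 ∧ r = 0) → z ≤ |r|)
    (hlt : a*b < z^2) : False := by
  have hz0 : z ≠ 0 := ne_of_gt hz
  have ha1 : (1:ℤ) ≤ a := ha
  have hb1 : (1:ℤ) ≤ b := hb
  -- x ≠ 0 and y ≠ 0
  have hx0 : x ≠ 0 := by
    intro h
    have hdvd : z^2 ∣ b * y^2 := ⟨C, by rw [h] at E; linear_combination E⟩
    have hzb : z^2 ∣ b := (cyz.symm.pow (n := 2) (m := 2)).dvd_of_dvd_mul_right hdvd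
    have h1 : z^2 ≤ b := Int.le_of_dvd hb hzb
    have h2 : b ≤ a*b := le_mul_of_one_le_left hb.le ha1
    linarith only [h1, h2, hlt]
  have hy0 : y ≠ 0 := by
    intro h
    have hdvd : z^2 ∣ a * x^2 := ⟨C, by rw [h] at E; linear_combination E⟩
    have hza : z^2 ∣ a := (cxz.symm.pow (n := 2) (m := 2)).dvd_of_dvd_mul_right hdvd
    have h1 : z^2 ≤ a := Int.le_of_dvd ha hza
    have h2 : a ≤ a*b := le_mul_of_one_le_right ha.le hb1
    linarith only [h1, h2, hlt]
  -- Bezout: u*x = 1 + 2*z*j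
  obtain ⟨x₀, hx₀⟩ : ∃ m, x = 2*m + 1 := by
    rcases Int.even_or_odd x with he | ho
    · exact absurd (even_iff_two_dvd.mp he) hx2
    · obtain ⟨m, hm⟩ := ho; exact ⟨m, hm⟩
  have cx2 : IsCoprime x 2 := ⟨1, -x₀, by rw [hx₀]; ring⟩
  obtain ⟨u, v, huv⟩ := cx2.mul_right cxz
  obtain ⟨j, hj⟩ : ∃ w : ℤ, w = -v := ⟨_, rfl⟩
  have R1 : u*x = 1 + 2*z*j := by rw [hj]; linear_combination huv
  have hu2 : ¬ (2:ℤ) ∣ u := by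
    rintro ⟨w, hw⟩
    have h21 : (2:ℤ) ∣ 1 := ⟨w*x - z*j, by rw [hw] at R1; linear_combination -R1⟩
    norm_num at h21
  -- main definitions
  obtain ⟨α, hα⟩ : ∃ w : ℤ, w = b*y*u := ⟨_, rfl⟩
  obtain ⟨i, hi⟩ : ∃ w : ℤ, w = b*y*j := ⟨_, rfl⟩
  have hαx : α*x - b*y = 2*z*i := by rw [hα, hi]; linear_combination (b*y)*R1
  obtain ⟨w₂, hw₂def⟩ : ∃ w : ℤ, w = b*(u^2*C*z - 2*a*j*(1+u*x)) := ⟨_, rfl⟩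
  have hw₂ : z*w₂ = α^2 + a*b := by
    rw [hw₂def, hα]; linear_combination (-(b*u^2))*E + (a*b*(1+u*x))*R1
  -- cast facts
  have hxz1 : ((x : ZMod 2)) = 1 :=
    (zmod2_cases _).resolve_left (fun h0 => hx2 ((int_dvd_two_iff x).mpr h0))
  have huz1 : ((u : ZMod 2)) = 1 :=
    (zmod2_cases _).resolve_left (fun h0 => hu2 ((int_dvd_two_iff u).mpr h0))
  -- the key construction
  have key : ∀ k c : ℤ, ¬(k = 0 ∧ c = 0) →
      (z*z ≤ (α*k+z*c)^2 + a*b*k^2 ∧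
       (¬((2:ℤ) ∣ k) → (2:ℤ) ∣ (c - b*C) → 2*(z*z) ≤ (α*k+z*c)^2 + a*b*k^2)) := by
    intro k c hkc
    obtain ⟨f, hf⟩ : ∃ w : ℤ, w = α*k + z*c := ⟨_, rfl⟩
    obtain ⟨t, htdef⟩ : ∃ w : ℤ, w = 2*i*k + c*x := ⟨_, rfl⟩
    obtain ⟨s, hsdef⟩ : ∃ w : ℤ, w = k*(u*C*z - 2*a*x*j) + c*y := ⟨_, rfl⟩
    obtain ⟨n, hndef⟩ : ∃ w : ℤ, w = k^2*w₂ + 2*α*(k*c) + z*c^2 := ⟨_, rfl⟩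
    have hn : z*n = f^2 + a*b*k^2 := by
      rw [hndef, hf]; linear_combination (k^2)*hw₂
    have ht : z*t = f*x - b*y*k := by
      rw [htdef, hf]; linear_combination (-k)*hαx
    have hs : z*s = f*y + a*x*k := by
      rw [hsdef, hf, hα]; linear_combination (-(u*k))*E + (a*x*k)*R1
    have hX1 : z^2*(C*b*k^2 - t^2) = x*(x*(a*b*k^2 - f^2) + 2*b*(f*(y*k))) := by
      linear_combination (-(z*t + (f*x - b*y*k)))*ht + (-(b*k^2))*E
    have hY1 : z^2*(C*a*k^2 - s^2) = y*(y*(a*b*k^2 - f^2) - 2*a*(f*(x*k))) := by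
      linear_combination (-(z*s + (f*y + a*x*k)))*hs + (-(a*k^2))*E
    obtain ⟨X₂, hX₂⟩ : x ∣ (C*b*k^2 - t^2) := by
      have h1 : x ∣ z^2 * (C*b*k^2 - t^2) := ⟨_, hX1⟩
      exact (cxz.pow_right (n := 2)).dvd_of_dvd_mul_left h1
    obtain ⟨Y₂, hY₂⟩ : y ∣ (C*a*k^2 - s^2) := by
      have h1 : y ∣ z^2 * (C*a*k^2 - s^2) := ⟨_, hY1⟩
      exact (cyz.pow_right (n := 2)).dvd_of_dvd_mul_left h1
    have hX1' : x*(a*b*k^2 - f^2) + 2*b*(f*(y*k)) = z^2 * X₂ := by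
      have h2 : x*(z^2*X₂) = x*(x*(a*b*k^2 - f^2) + 2*b*(f*(y*k))) := by
        rw [← hX1, hX₂]; ring
      exact (mul_left_cancel₀ hx0 h2).symm
    have hY1' : y*(a*b*k^2 - f^2) - 2*a*(f*(x*k)) = z^2 * Y₂ := by
      have h2 : y*(z^2*Y₂) = y*(y*(a*b*k^2 - f^2) - 2*a*(f*(x*k))) := by
        rw [← hY1, hY₂]; ring
      exact (mul_left_cancel₀ hy0 h2).symm
    have hEq : a*X₂^2 + b*Y₂^2 = C*n^2 := by
      have master : a*(x*(a*b*k^2 - f^2) + 2*b*(f*(y*k)))^2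
          + b*(y*(a*b*k^2 - f^2) - 2*a*(f*(x*k)))^2
          = C*(z*(f^2 + a*b*k^2))^2 := by
        linear_combination ((f^2+a*b*k^2)^2)*E
      rw [hX1', hY1'] at master
      have hzn2 : z*(f^2+a*b*k^2) = z^2 * n := by rw [← hn]; ring
      rw [hzn2] at master
      have hzz : ((z^2)^2 : ℤ) ≠ 0 := pow_ne_zero 2 (pow_ne_zero 2 hz0)
      have h4 : (z^2)^2 * (a*X₂^2 + b*Y₂^2) = (z^2)^2 * (C*n^2) := by
        linear_combination master
      exact mul_left_cancel₀ hzz h4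
    have hNpos : 0 < f^2 + a*b*k^2 := by
      rcases eq_or_ne k 0 with hk | hk
      · have hc : c ≠ 0 := fun hc => hkc ⟨hk, hc⟩
        have hfne : f ≠ 0 := by
          rw [hf, hk]; simpa using mul_ne_zero hz0 hc
        have h5 : 0 < f^2 := (sq_nonneg f).lt_of_ne (Ne.symm (pow_ne_zero 2 hfne))
        have h6 : 0 ≤ a*b*k^2 := mul_nonneg (mul_pos ha hb).le (sq_nonneg k)
        linarith only [h5, h6]
      · have h5 : 0 < k^2 := (sq_nonneg k).lt_of_ne (Ne.symm (pow_ne_zero 2 hk))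
        have h6 : 0 < a*b*k^2 := mul_pos (mul_pos ha hb) h5
        linarith only [h6, sq_nonneg f]
    have hnpos : 0 < n := by
      by_contra hcon
      push_neg at hcon
      have h7 : z * n ≤ z * 0 := mul_le_mul_of_nonneg_left hcon hz.le
      rw [mul_zero] at h7
      linarith only [h7, hn, hNpos]
    have hmin1 : z ≤ n := by
      have h6 := hmin X₂ Y₂ n hEq (by rintro ⟨_, _, h3⟩; exact absurd h3 (ne_of_gt hnpos))
      rwa [abs_of_pos hnpos] at h6
    constructor
    · calc z*z ≤ z*n := mul_le_mul_of_nonneg_left hmin1 hz.le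
        _ = (α*k+z*c)^2 + a*b*k^2 := by rw [hn, hf]
    · intro hk2 hc2
      -- parity facts via ZMod 2
      have hkz1 : ((k : ZMod 2)) = 1 :=
        (zmod2_cases _).resolve_left (fun h0 => hk2 ((int_dvd_two_iff k).mpr h0))
      have hcz : ((c : ZMod 2)) = (b : ZMod 2) * (C : ZMod 2) := by
        have h0 := (int_dvd_two_iff _).mp hc2
        push_cast at h0
        linear_combination h0
      have hnev : (2:ℤ) ∣ n := by
        rw [int_dvd_two_iff, hndef, hw₂def, hα]
        push_cast
        rw [hxz1, huz1, hkz1, hcz]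
        rcases zmod2_cases (b : ZMod 2) with hB | hB <;>
        rcases zmod2_cases (C : ZMod 2) with hC' | hC' <;>
        rcases zmod2_cases (z : ZMod 2) with hZ | hZ <;>
        rcases zmod2_cases (a : ZMod 2) with hA | hA <;>
        rcases zmod2_cases (j : ZMod 2) with hJ | hJ <;>
        rcases zmod2_cases (y : ZMod 2) with hY | hY <;>
        simp [hB, hC', hZ, hA, hJ, hY] <;> decide
      have hXev : (2:ℤ) ∣ X₂ := by
        have hd : (2:ℤ) ∣ x * X₂ := by
          rw [← hX₂, int_dvd_two_iff, htdef, hi]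
          push_cast
          rw [hxz1, hkz1, hcz]
          rcases zmod2_cases (b : ZMod 2) with hB | hB <;>
          rcases zmod2_cases (C : ZMod 2) with hC' | hC' <;>
          rcases zmod2_cases (y : ZMod 2) with hY | hY <;>
          rcases zmod2_cases (j : ZMod 2) with hJ | hJ <;>
          simp [hB, hC', hY, hJ] <;> decide
        exact (Int.prime_two.dvd_mul.mp hd).resolve_left hx2
      -- Y₂ even
      obtain ⟨n₁, hn₁⟩ := hnev
      obtain ⟨X₁', hX₁'e⟩ := hXev
      have hYev : (2:ℤ) ∣ Y₂ := by
        have h8 : b*Y₂^2 = C*n^2 - a*X₂^2 := by linarith [hEq]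
        rcases Int.even_or_odd b with hbe | hbo
        · obtain ⟨b₁, hb₁⟩ := hbe
          have hb₁odd : ¬ (2:ℤ) ∣ b₁ := by
            rintro ⟨w, hw⟩
            exact hb4 ⟨w, by rw [hb₁, hw]; ring⟩
          rw [hb₁, hn₁, hX₁'e] at h8
          have h13 : b₁*Y₂^2 = 2*(C*n₁^2 - a*X₁'^2) :=
            mul_left_cancel₀ two_ne_zero (by linear_combination h8)
          have h14 : (2:ℤ) ∣ b₁*Y₂^2 := ⟨C*n₁^2 - a*X₁'^2, h13⟩
          have h15 := (Int.prime_two.dvd_mul.mp h14).resolve_left hb₁odd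
          exact Int.prime_two.dvd_of_dvd_pow h15
        · have h9 : (2:ℤ) ∣ b*Y₂^2 := by
            rw [h8, hn₁, hX₁'e]; exact ⟨C*(2*n₁^2)-a*(2*X₁'^2), by ring⟩
          have h10 : ¬ (2:ℤ) ∣ b := by
            rw [← Int.not_even_iff_odd] at hbo
            intro hd; exact hbo (even_iff_two_dvd.mpr hd)
          have h11 := (Int.prime_two.dvd_mul.mp h9).resolve_left h10
          exact Int.prime_two.dvd_of_dvd_pow h11
      obtain ⟨Y₁', hY₁'e⟩ := hYev
      have hEq' : a*X₁'^2 + b*Y₁'^2 = C*n₁^2 := by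
        have h12 : (4:ℤ) * (a*X₁'^2 + b*Y₁'^2) = 4 * (C*n₁^2) := by
          have h12' := hEq
          rw [hn₁, hX₁'e, hY₁'e] at h12'
          linear_combination h12'
        exact mul_left_cancel₀ (by norm_num : (4:ℤ) ≠ 0) h12
      have hn₁pos : 0 < n₁ := by rw [hn₁] at hnpos; linarith only [hnpos]
      have hmin2 : z ≤ n₁ := by
        have h6 := hmin X₁' Y₁' n₁ hEq' (by rintro ⟨_, _, h3⟩; exact absurd h3 (ne_of_gt hn₁pos))
        rwa [abs_of_pos hn₁pos] at h6
      have h20 : z*z ≤ z*n₁ := mul_le_mul_of_nonneg_left hmin2 hz.le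
      have h21 : z*n = 2*(z*n₁) := by rw [hn₁]; ring
      calc 2*(z*z) ≤ z*n := by linarith only [h20, h21]
        _ = (α*k+z*c)^2 + a*b*k^2 := by rw [hn, hf]
  -- apply the reduction lemma
  obtain ⟨k₁, c₁, k₂, c₂, hdet, hord, hI1, hI2⟩ := exists_reduced_pair (α^2+a*b) (α*z) (z^2)
    (by
      intro k c hkc
      have h := (key k c hkc).1
      have hq : (α^2+a*b)*k^2 + 2*(α*z)*(k*c) + z^2*c^2 = (α*k+z*c)^2 + a*b*k^2 := by ring
      rw [hq]
      have hzz : 0 < z*z := mul_pos hz hz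
      linarith only [h, hzz])
  obtain ⟨A₁, hA₁⟩ : ∃ w : ℤ, w = (α^2+a*b)*k₁^2 + 2*(α*z)*(k₁*c₁) + z^2*c₁^2 := ⟨_, rfl⟩
  obtain ⟨A₂, hA₂⟩ : ∃ w : ℤ, w = (α^2+a*b)*k₂^2 + 2*(α*z)*(k₂*c₂) + z^2*c₂^2 := ⟨_, rfl⟩
  obtain ⟨I, hIdef⟩ : ∃ w : ℤ, w = (α^2+a*b)*(k₁*k₂) + (α*z)*(k₁*c₂+k₂*c₁) + z^2*(c₁*c₂) := ⟨_, rfl⟩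
  rw [← hA₁] at hord hI1 hI2
  rw [← hA₂] at hord
  rw [← hIdef] at hI1 hI2
  have hQ1 : A₁ = (α*k₁+z*c₁)^2 + a*b*k₁^2 := by rw [hA₁]; ring
  have hQ2 : A₂ = (α*k₂+z*c₂)^2 + a*b*k₂^2 := by rw [hA₂]; ring
  have hdetA : A₁*A₂ - I^2 = a*b*(z^2) := by
    have h0 : A₁*A₂ - I^2 = a*b*z^2*(k₁*c₂ - k₂*c₁)^2 := by rw [hA₁, hA₂, hIdef]; ring
    rw [hdet] at h0; simpa using h0
  have hnz1 : ¬(k₁ = 0 ∧ c₁ = 0) := by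
    rintro ⟨h1, h2⟩; rw [h1, h2] at hdet; simp at hdet
  have hnz2 : ¬(k₂ = 0 ∧ c₂ = 0) := by
    rintro ⟨h1, h2⟩; rw [h1, h2] at hdet; simp at hdet
  have hnzp : ¬(k₁ + k₂ = 0 ∧ c₁ + c₂ = 0) := by
    rintro ⟨h1, h2⟩
    have h3 : k₁*c₂ - k₂*c₁ = 0 := by
      have e1 : k₁ = -k₂ := by linarith
      have e2 : c₁ = -c₂ := by linarith
      rw [e1, e2]; ring
    linarith only [hdet, h3]
  have hnzm : ¬(k₁ - k₂ = 0 ∧ c₁ - c₂ = 0) := by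
    rintro ⟨h1, h2⟩
    have h3 : k₁*c₂ - k₂*c₁ = 0 := by
      have e1 : k₁ = k₂ := by linarith
      have e2 : c₁ = c₂ := by linarith
      rw [e1, e2]; ring
    linarith only [hdet, h3]
  have hA1low : z*z ≤ A₁ := by rw [hQ1]; exact (key k₁ c₁ hnz1).1
  have hA2low : z*z ≤ A₂ := by rw [hQ2]; exact (key k₂ c₂ hnz2).1
  -- select the good parity class
  have hdet2 : ((k₁ : ZMod 2)) * ((c₂ : ZMod 2)) - ((k₂ : ZMod 2)) * ((c₁ : ZMod 2)) = 1 := by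
    have h0 := congrArg (fun w : ℤ => (w : ZMod 2)) hdet
    push_cast at h0
    exact h0
  have conv1 : ∀ w : ℤ, (w : ZMod 2) = 1 → ¬(2:ℤ) ∣ w := by
    intro w hw hd
    rw [(int_dvd_two_iff w).mp hd] at hw
    exact absurd hw (by decide)
  have conv2 : ∀ w v : ℤ, (w : ZMod 2) = (v : ZMod 2) → (2:ℤ) ∣ (w - v) := by
    intro w v hwv
    rw [int_dvd_two_iff]
    push_cast
    rw [hwv]; ring
  have hsel : (¬(2:ℤ)∣k₁ ∧ (2:ℤ)∣(c₁ - b*C)) ∨ (¬(2:ℤ)∣k₂ ∧ (2:ℤ)∣(c₂ - b*C)) ∨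
      (¬(2:ℤ)∣(k₁+k₂) ∧ (2:ℤ)∣((c₁+c₂) - b*C)) := by
    rcases zmod2_select (k₁:ZMod 2) (c₁:ZMod 2) (k₂:ZMod 2) (c₂:ZMod 2)
      ((b:ZMod 2)*(C:ZMod 2)) hdet2 with ⟨h1, h2⟩ | ⟨h1, h2⟩ | ⟨h1, h2⟩
    · exact Or.inl ⟨conv1 _ h1, conv2 c₁ (b*C) (by push_cast; rw [h2])⟩
    · exact Or.inr (Or.inl ⟨conv1 _ h1, conv2 c₂ (b*C) (by push_cast; rw [h2])⟩)
    · exact Or.inr (Or.inr ⟨conv1 _ (by push_cast; exact h1), conv2 (c₁+c₂) (b*C)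
        (by push_cast; exact h2)⟩)
  -- numeric setup
  have hsq : z*z = z^2 := by ring
  have hzz : (0:ℤ) < z^2 := by positivity
  have hdetA' : A₁*A₂ = a*b*z^2 + I*I := by linear_combination hdetA
  have hA1pos : 0 < A₁ := by linarith only [hA1low, hsq, hzz]
  have h5 : A₁*A₁ ≤ A₁*A₂ := mul_le_mul_of_nonneg_left hord hA1pos.le
  have hE4 : 4*(I*I) ≤ A₁*A₁ := by
    nlinarith only [mul_nonneg (show (0:ℤ) ≤ A₁ - 2*I by linarith only [hI1])
      (show (0:ℤ) ≤ A₁ + 2*I by linarith only [hI2])]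
  have habz : a*b*z^2 ≤ z^2*z^2 - z^2 := by
    nlinarith only [mul_le_mul_of_nonneg_right (show a*b ≤ z^2 - 1 by linarith only [hlt]) hzz.le]
  have h3A : 3*(A₁*A₁) ≤ 4*(a*b*z^2) := by linarith only [h5, hE4, hdetA']
  rcases hsel with ⟨hk, hc⟩ | ⟨hk, hc⟩ | ⟨hk, hc⟩
  · have hg := (key k₁ c₁ hnz1).2 hk hc
    rw [← hQ1] at hg
    have hA1nn : (0:ℤ) ≤ A₁ := le_trans (by positivity) hg
    nlinarith only [h3A, habz, hzz, mul_le_mul hg hg (by positivity) hA1nn]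
  · have hg := (key k₂ c₂ hnz2).2 hk hc
    rw [← hQ2] at hg
    have hA1nn : (0:ℤ) ≤ A₁ := le_trans (mul_pos hz hz).le hA1low
    nlinarith only [h5, hE4, hdetA', habz, hzz,
      mul_le_mul hA1low hg (by positivity) hA1nn]
  · have hkm : ¬(2:ℤ) ∣ (k₁ - k₂) := by
      intro hd
      apply hk
      have h0 : k₁ + k₂ = (k₁ - k₂) + 2*k₂ := by ring
      rw [h0]; exact dvd_add hd ⟨k₂, rfl⟩
    have hcm : (2:ℤ) ∣ ((c₁ - c₂) - b*C) := by
      have h0 : (c₁ - c₂) - b*C = ((c₁ + c₂) - b*C) - 2*c₂ := by ring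
      rw [h0]; exact dvd_sub hc ⟨c₂, rfl⟩
    have hgp := (key (k₁+k₂) (c₁+c₂) hnzp).2 hk hc
    have hgm := (key (k₁-k₂) (c₁-c₂) hnzm).2 hkm hcm
    have q3p : (α*(k₁+k₂)+z*(c₁+c₂))^2 + a*b*(k₁+k₂)^2 = A₁ + 2*I + A₂ := by
      rw [hA₁, hA₂, hIdef]; ring
    have q3m : (α*(k₁-k₂)+z*(c₁-c₂))^2 + a*b*(k₁-k₂)^2 = A₁ - 2*I + A₂ := by
      rw [hA₁, hA₂, hIdef]; ring
    rw [q3p] at hgp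
    rw [q3m] at hgm
    have hIlt : I*I < z^2*z^2 := by linarith only [h3A, hE4, habz, hzz, mul_pos hzz hzz]
    have h8 : 0 ≤ (A₁ - z^2)*(A₂ - z^2) :=
      mul_nonneg (by linarith only [hA1low, hsq]) (by linarith only [hA2low, hsq])
    rcases le_or_gt 0 I with hIpos | hIneg
    · have hIltz : I < z^2 := by
        by_contra hcon
        push_neg at hcon
        nlinarith only [hIlt, mul_le_mul hcon hcon hzz.le (le_trans hzz.le hcon)]
      have h9 : I*I ≤ I*z^2 := mul_le_mul_of_nonneg_left hIltz.le hIpos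
      nlinarith only [h8, mul_le_mul_of_nonneg_left hgm hzz.le, hdetA', habz, h9, hzz,
        mul_nonneg hIpos hzz.le]
    · have hIpos' : 0 ≤ -I := by linarith
      have hIltz : -I < z^2 := by
        by_contra hcon
        push_neg at hcon
        nlinarith only [hIlt, mul_le_mul hcon hcon hzz.le (le_trans hzz.le hcon)]
      have h9 : I*I ≤ (-I)*z^2 := by
        nlinarith only [mul_le_mul_of_nonneg_left hIltz.le hIpos']
      nlinarith only [h8, mul_le_mul_of_nonneg_left hgp hzz.le, hdetA', habz, h9, hzz,
        mul_nonneg hIpos' hzz.le]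

private lemma int_prime_coprime {p : ℕ} (hp : p.Prime) (z : ℤ) (h : ¬ (p:ℤ) ∣ z) :
    IsCoprime ((p:ℤ)) z := by
  rw [Int.isCoprime_iff_gcd_eq_one]
  have h1 : (Int.gcd ((p:ℤ)) z) ∣ p := by
    have h2 : (↑(Int.gcd ((p:ℤ)) z) : ℤ) ∣ (p:ℤ) := Int.gcd_dvd_left _ _
    exact_mod_cast h2
  rcases (Nat.Prime.eq_one_or_self_of_dvd hp _ h1) with h2 | h2
  · exact h2
  · exfalso
    apply h
    have h3 : (↑(Int.gcd ((p:ℤ)) z) : ℤ) ∣ z := Int.gcd_dvd_right _ _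
    rwa [h2] at h3

private lemma sqfree_not_unit_cast {p : ℕ} (hp : p.Prime) : ¬ IsUnit ((p:ℤ)) := by
  rw [Int.isUnit_iff]
  have h2 := hp.two_le
  rintro (h | h) <;>
  · have h3 : ((p:ℕ):ℤ) = (p:ℤ) := rfl
    omega

private lemma holzer_pos (a b C : ℤ) (ha : 0 < a) (hb : 0 < b) (hC : 0 < C)
    (hsa : Squarefree a) (hsb : Squarefree b) (hsC : Squarefree C)
    (hsol : ∃ x y z : ℤ, ¬(x = 0 ∧ y = 0 ∧ z = 0) ∧ a*x^2 + b*y^2 = C*z^2) :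
    ∃ x y z : ℤ, ¬(x = 0 ∧ y = 0 ∧ z = 0) ∧ a*x^2 + b*y^2 = C*z^2 ∧
      x^2 ≤ b*C ∧ y^2 ≤ a*C ∧ z^2 ≤ a*b := by
  classical
  have hznz : ∀ x y z : ℤ, a*x^2 + b*y^2 = C*z^2 → ¬(x = 0 ∧ y = 0 ∧ z = 0) → z ≠ 0 := by
    intro x y z hE hnt hz0
    apply hnt
    rw [hz0] at hE
    have h0 : a*x^2 + b*y^2 = 0 := by simpa using hE
    have h1 : 0 ≤ a*x^2 := mul_nonneg ha.le (sq_nonneg x)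
    have h2 : 0 ≤ b*y^2 := mul_nonneg hb.le (sq_nonneg y)
    have hax : x^2 = 0 := by
      have h3 : a*x^2 = 0 := le_antisymm (by linarith) h1
      exact (mul_eq_zero.mp h3).resolve_left (ne_of_gt ha)
    have hay : y^2 = 0 := by
      have h3 : b*y^2 = 0 := le_antisymm (by linarith) h2
      exact (mul_eq_zero.mp h3).resolve_left (ne_of_gt hb)
    exact ⟨pow_eq_zero_iff (by norm_num : 2 ≠ 0) |>.mp hax,
      pow_eq_zero_iff (by norm_num : 2 ≠ 0) |>.mp hay, hz0⟩
  obtain ⟨x', y', z', hnt', hE'⟩ := hsol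
  obtain ⟨m, hmS, hminm⟩ := (Nat.lt_wfRel.wf).has_min
    {n : ℕ | ∃ x y z : ℤ, ¬(x = 0 ∧ y = 0 ∧ z = 0) ∧ a*x^2 + b*y^2 = C*z^2 ∧ z.natAbs = n}
    ⟨z'.natAbs, x', y', z', hnt', hE', rfl⟩
  obtain ⟨x, y, z0, hnt, hE0, hm⟩ := hmS
  have hz0ne : z0 ≠ 0 := hznz _ _ _ hE0 hnt
  have hzeq : ((m:ℕ) : ℤ) = |z0| := by rw [← hm, Int.abs_eq_natAbs]
  have hEz : a*x^2 + b*y^2 = C*((m:ℤ))^2 := by rw [hzeq, sq_abs]; exact hE0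
  have hzpos : (0:ℤ) < (m:ℤ) := by rw [hzeq]; exact abs_pos.mpr hz0ne
  have hmin : ∀ p q r : ℤ, a*p^2 + b*q^2 = C*r^2 → ¬(p=0∧q=0∧r=0) → (m:ℤ) ≤ |r| := by
    intro p q r hEr hntr
    have h4 : ¬ (r.natAbs < m) := hminm _ ⟨p, q, r, hntr, hEr, rfl⟩
    rw [Int.abs_eq_natAbs]
    exact_mod_cast not_lt.mp h4
  have hsmaller : ∀ p : ℕ, p.Prime → (p:ℤ) ∣ x → (p:ℤ) ∣ y → (p:ℤ) ∣ (m:ℤ) → False := by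
    intro p hp hpx hpy hpz
    obtain ⟨x1, hx1⟩ := hpx
    obtain ⟨y1, hy1⟩ := hpy
    obtain ⟨z1, hz1⟩ := hpz
    have hp0 : ((p:ℤ)) ≠ 0 := by exact_mod_cast hp.ne_zero
    have hE2 := hEz
    rw [hx1, hy1, hz1] at hE2
    have hE1 : a*x1^2 + b*y1^2 = C*z1^2 := by
      have h5 : (p:ℤ)^2 * (a*x1^2 + b*y1^2) = (p:ℤ)^2 * (C*z1^2) := by linear_combination hE2
      exact mul_left_cancel₀ (pow_ne_zero 2 hp0) h5
    have hz1ne : z1 ≠ 0 := by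
      intro h
      rw [h, mul_zero] at hz1
      exact (ne_of_gt hzpos) hz1
    have hlt2 : z1.natAbs < m := by
      have h7 : m = p * z1.natAbs := by
        have h6 := congrArg Int.natAbs hz1
        simpa [Int.natAbs_mul] using h6
      have h8 : 1 ≤ z1.natAbs := Int.natAbs_pos.mpr hz1ne
      have h9 : 2 ≤ p := hp.two_le
      calc z1.natAbs < 2*z1.natAbs := by omega
        _ ≤ p*z1.natAbs := Nat.mul_le_mul_right _ h9
        _ = m := h7.symm
    exact hminm _ ⟨x1, y1, z1, (by rintro ⟨_, _, h⟩; exact hz1ne h), hE1, rfl⟩ hlt2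
  have hxy : ∀ p : ℕ, p.Prime → (p:ℤ) ∣ x → (p:ℤ) ∣ y → False := by
    intro p hp hpx hpy
    by_cases hpz : (p:ℤ) ∣ (m:ℤ)
    · exact hsmaller p hp hpx hpy hpz
    · obtain ⟨x1, hx1⟩ := hpx
      obtain ⟨y1, hy1⟩ := hpy
      have h5 : (p:ℤ)^2 ∣ C*((m:ℤ))^2 := by
        rw [← hEz]
        exact dvd_add ⟨a*x1^2, by rw [hx1]; ring⟩ ⟨b*y1^2, by rw [hy1]; ring⟩
      have hcp : IsCoprime ((p:ℤ)^2) (((m:ℤ))^2) := (int_prime_coprime hp _ hpz).pow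
      have h6 : (p:ℤ)^2 ∣ C := hcp.dvd_of_dvd_mul_right h5
      exact sqfree_not_unit_cast hp (hsC ((p:ℤ)) (by rwa [← sq]))
  have hxz : ∀ p : ℕ, p.Prime → (p:ℤ) ∣ x → (p:ℤ) ∣ (m:ℤ) → False := by
    intro p hp hpx hpz
    by_cases hpy : (p:ℤ) ∣ y
    · exact hsmaller p hp hpx hpy hpz
    · obtain ⟨x1, hx1⟩ := hpx
      obtain ⟨z1, hz1⟩ := hpz
      have hE3 := hEz
      rw [hx1, hz1] at hE3
      have h5 : (p:ℤ)^2 ∣ b*y^2 := ⟨C*z1^2 - a*x1^2, by linear_combination hE3⟩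
      have hcp : IsCoprime ((p:ℤ)^2) (y^2) := (int_prime_coprime hp _ hpy).pow
      have h6 : (p:ℤ)^2 ∣ b := hcp.dvd_of_dvd_mul_right h5
      exact sqfree_not_unit_cast hp (hsb ((p:ℤ)) (by rwa [← sq]))
  have hyz : ∀ p : ℕ, p.Prime → (p:ℤ) ∣ y → (p:ℤ) ∣ (m:ℤ) → False := by
    intro p hp hpy hpz
    by_cases hpx : (p:ℤ) ∣ x
    · exact hsmaller p hp hpx hpy hpz
    · obtain ⟨y1, hy1⟩ := hpy
      obtain ⟨z1, hz1⟩ := hpz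
      have hE3 := hEz
      rw [hy1, hz1] at hE3
      have h5 : (p:ℤ)^2 ∣ a*x^2 := ⟨C*z1^2 - b*y1^2, by linear_combination hE3⟩
      have hcp : IsCoprime ((p:ℤ)^2) (x^2) := (int_prime_coprime hp _ hpx).pow
      have h6 : (p:ℤ)^2 ∣ a := hcp.dvd_of_dvd_mul_right h5
      exact sqfree_not_unit_cast hp (hsa ((p:ℤ)) (by rwa [← sq]))
  have hcoord : ∀ w : ℤ, (∀ p : ℕ, p.Prime → (p:ℤ) ∣ w → (p:ℤ) ∣ (m:ℤ) → False) →
      IsCoprime w ((m:ℤ)) := by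
    intro w hw
    rw [Int.isCoprime_iff_gcd_eq_one]
    by_contra hg
    obtain ⟨p, hp, hpd⟩ := Nat.exists_prime_and_dvd hg
    have h1 : (p:ℤ) ∣ w := dvd_trans (Int.natCast_dvd_natCast.mpr hpd)
      (Int.gcd_dvd_left (a := w) (b := ((m:ℤ))))
    have h2 : (p:ℤ) ∣ ((m:ℤ)) := dvd_trans (Int.natCast_dvd_natCast.mpr hpd)
      (Int.gcd_dvd_right (a := w) (b := ((m:ℤ))))
    exact hw p hp h1 h2
  have cxz : IsCoprime x ((m:ℤ)) := hcoord x hxz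
  have cyz : IsCoprime y ((m:ℤ)) := hcoord y hyz
  have sq4 : ∀ w : ℤ, Squarefree w → ¬((2:ℤ)*2 ∣ w) := by
    intro w hw hd
    have h1 := hw 2 hd
    rw [Int.isUnit_iff] at h1
    rcases h1 with h | h <;> norm_num at h
  by_cases hcase : a*b < ((m:ℤ))^2
  · exfalso
    by_cases hx2 : (2:ℤ) ∣ x
    · have hy2 : ¬ (2:ℤ) ∣ y := by
        intro h2
        exact hxy 2 Nat.prime_two (by exact_mod_cast hx2) (by exact_mod_cast h2)
      exact descent b a C y x ((m:ℤ)) hb ha hC hzpos (by linear_combination hEz) hy2 cyz cxz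
        (sq4 a hsa)
        (fun p q r hEr hntr => hmin q p r (by linear_combination hEr) (by tauto))
        (by linarith [hcase, mul_comm a b])
    · exact descent a b C x y ((m:ℤ)) ha hb hC hzpos hEz hx2 cxz cyz (sq4 b hsb) hmin hcase
  · push_neg at hcase
    have hnt2 : ¬(x = 0 ∧ y = 0 ∧ ((m:ℤ)) = 0) := by
      rintro ⟨_, _, h⟩
      exact absurd h (ne_of_gt hzpos)
    have hby : 0 ≤ b*y^2 := mul_nonneg hb.le (sq_nonneg y)
    have hax : 0 ≤ a*x^2 := mul_nonneg ha.le (sq_nonneg x)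
    have h1 : a*x^2 ≤ C*((m:ℤ))^2 := by linarith [hEz]
    have h2 : b*y^2 ≤ C*((m:ℤ))^2 := by linarith [hEz]
    have h3 : C*((m:ℤ))^2 ≤ C*(a*b) := mul_le_mul_of_nonneg_left hcase hC.le
    refine ⟨x, y, ((m:ℤ)), hnt2, hEz, ?_, ?_, hcase⟩
    · have h4 : a*x^2 ≤ a*(b*C) := by
        have h5 : C*(a*b) = a*(b*C) := by ring
        linarith
      exact le_of_mul_le_mul_left h4 ha
    · have h4 : b*y^2 ≤ b*(a*C) := by
        have h5 : C*(a*b) = b*(a*C) := by ring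
        linarith
      exact le_of_mul_le_mul_left h4 hb

private lemma squarefree_neg' {a : ℤ} (h : Squarefree a) : Squarefree (-a) :=
  fun x hx => h x ((dvd_neg).mp hx)

private lemma all_pos_trivial (a b c x y z : ℤ) (ha : 0 < a) (hb : 0 < b) (hc : 0 < c)
    (hE : a*x^2 + b*y^2 + c*z^2 = 0) : x = 0 ∧ y = 0 ∧ z = 0 := by
  have h1 : 0 ≤ a*x^2 := mul_nonneg ha.le (sq_nonneg x)
  have h2 : 0 ≤ b*y^2 := mul_nonneg hb.le (sq_nonneg y)
  have h3 : 0 ≤ c*z^2 := mul_nonneg hc.le (sq_nonneg z)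
  have e1 : a*x^2 = 0 := le_antisymm (by linarith) h1
  have e2 : b*y^2 = 0 := le_antisymm (by linarith) h2
  have e3 : c*z^2 = 0 := le_antisymm (by linarith) h3
  refine ⟨?_, ?_, ?_⟩
  · exact pow_eq_zero_iff (by norm_num : 2 ≠ 0) |>.mp
      ((mul_eq_zero.mp e1).resolve_left (ne_of_gt ha))
  · exact pow_eq_zero_iff (by norm_num : 2 ≠ 0) |>.mp
      ((mul_eq_zero.mp e2).resolve_left (ne_of_gt hb))
  · exact pow_eq_zero_iff (by norm_num : 2 ≠ 0) |>.mp
      ((mul_eq_zero.mp e3).resolve_left (ne_of_gt hc))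

private lemma holzer_case (a b c : ℤ) (ha : 0 < a) (hb : 0 < b) (hc : c < 0)
    (hsa : Squarefree a) (hsb : Squarefree b) (hsc : Squarefree c)
    (hsol : ∃ x y z : ℤ, ¬(x = 0 ∧ y = 0 ∧ z = 0) ∧ a*x^2 + b*y^2 + c*z^2 = 0) :
    ∃ x y z : ℤ, ¬(x = 0 ∧ y = 0 ∧ z = 0) ∧ a*x^2 + b*y^2 + c*z^2 = 0 ∧
      x^2 ≤ |b*c| ∧ y^2 ≤ |a*c| ∧ z^2 ≤ |a*b| := by
  obtain ⟨x, y, z, hnt, hE⟩ := hsol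
  have hCpos : 0 < -c := by linarith
  obtain ⟨X, Y, Z, hnt', hE', h1, h2, h3⟩ := holzer_pos a b (-c) ha hb hCpos hsa hsb
    (squarefree_neg' hsc) ⟨x, y, z, hnt, by linear_combination hE⟩
  refine ⟨X, Y, Z, hnt', by linear_combination hE', ?_, ?_, ?_⟩
  · rwa [abs_mul, abs_of_pos hb, abs_of_neg hc]
  · rwa [abs_mul, abs_of_pos ha, abs_of_neg hc]
  · rwa [abs_mul, abs_of_pos ha, abs_of_pos hb]

/-- **Holzer's theorem**: if a ternary diagonal quadratic form
`a·X₀² + b·X₁² + c·X₂² = 0` with nonzero squarefree pairwise coprime integer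
coefficients has a nontrivial integer solution, then it has one satisfying
`x₀² ≤ |b·c|`, `x₁² ≤ |a·c|` and `x₂² ≤ |a·b|`. -/
theorem holzer_theorem (a b c : ℤ) (ha : a ≠ 0) (hb : b ≠ 0) (hc : c ≠ 0)
    (hsa : Squarefree a) (hsb : Squarefree b) (hsc : Squarefree c)
    (hab : IsCoprime a b) (hac : IsCoprime a c) (hbc : IsCoprime b c)
    (hsol : ∃ x₀ x₁ x₂ : ℤ, (x₀, x₁, x₂) ≠ (0, 0, 0) ∧
      a * x₀ ^ 2 + b * x₁ ^ 2 + c * x₂ ^ 2 = 0) :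
    ∃ x₀ x₁ x₂ : ℤ, (x₀, x₁, x₂) ≠ (0, 0, 0) ∧
      a * x₀ ^ 2 + b * x₁ ^ 2 + c * x₂ ^ 2 = 0 ∧
      x₀ ^ 2 ≤ |b * c| ∧ x₁ ^ 2 ≤ |a * c| ∧ x₂ ^ 2 ≤ |a * b| := by
  have tuple_iff : ∀ x y z : ℤ, ((x, y, z) ≠ ((0:ℤ), (0:ℤ), (0:ℤ))) ↔ ¬(x = 0 ∧ y = 0 ∧ z = 0) := by
    intro x y z
    simp [Prod.ext_iff]
  obtain ⟨x, y, z, hnt0, hE⟩ := hsol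
  have hnt : ¬(x = 0 ∧ y = 0 ∧ z = 0) := (tuple_iff x y z).mp hnt0
  rcases ha.lt_or_gt with ha' | ha' <;> rcases hb.lt_or_gt with hb' | hb' <;>
    rcases hc.lt_or_gt with hc' | hc'
  · -- a<0, b<0, c<0
    exact absurd (all_pos_trivial (-a) (-b) (-c) x y z (by linarith) (by linarith) (by linarith)
      (by linear_combination -hE)) hnt
  · -- a<0, b<0, c>0 : negate -> (+,+,-)
    obtain ⟨X, Y, Z, hnt', hE', h1, h2, h3⟩ := holzer_case (-a) (-b) (-c)
      (by linarith) (by linarith) (by linarith)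
      (squarefree_neg' hsa) (squarefree_neg' hsb) (squarefree_neg' hsc)
      ⟨x, y, z, hnt, by linear_combination -hE⟩
    refine ⟨X, Y, Z, (tuple_iff X Y Z).mpr hnt', by linear_combination -hE', ?_, ?_, ?_⟩
    · rwa [neg_mul_neg] at h1
    · rwa [neg_mul_neg] at h2
    · rwa [neg_mul_neg] at h3
  · -- a<0, b>0, c<0 : negate -> (+,-,+), negative slot is b: use (-a, -c, -b)
    obtain ⟨X, Y, Z, hnt', hE', h1, h2, h3⟩ := holzer_case (-a) (-c) (-b)
      (by linarith) (by linarith) (by linarith)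
      (squarefree_neg' hsa) (squarefree_neg' hsc) (squarefree_neg' hsb)
      ⟨x, z, y, by tauto, by linear_combination -hE⟩
    refine ⟨X, Z, Y, (tuple_iff X Z Y).mpr (by tauto), by linear_combination -hE', ?_, ?_, ?_⟩
    · rw [neg_mul_neg] at h1
      rwa [mul_comm c b] at h1
    · rwa [neg_mul_neg] at h3
    · rwa [neg_mul_neg] at h2
  · -- a<0, b>0, c>0 : one negative (a): use (b, c, a)
    obtain ⟨X, Y, Z, hnt', hE', h1, h2, h3⟩ := holzer_case b c a hb' hc' ha'
      hsb hsc hsa ⟨y, z, x, by tauto, by linear_combination hE⟩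
    refine ⟨Z, X, Y, (tuple_iff Z X Y).mpr (by tauto), by linear_combination hE', ?_, ?_, ?_⟩
    · exact h3
    · rwa [mul_comm c a] at h1
    · rwa [mul_comm b a] at h2
  · -- a>0, b<0, c<0 : negate -> (-,+,+), negative slot a: use (-b, -c, -a)
    obtain ⟨X, Y, Z, hnt', hE', h1, h2, h3⟩ := holzer_case (-b) (-c) (-a)
      (by linarith) (by linarith) (by linarith)
      (squarefree_neg' hsb) (squarefree_neg' hsc) (squarefree_neg' hsa)
      ⟨y, z, x, by tauto, by linear_combination -hE⟩
    refine ⟨Z, X, Y, (tuple_iff Z X Y).mpr (by tauto), by linear_combination -hE', ?_, ?_, ?_⟩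
    · rwa [neg_mul_neg] at h3
    · rw [neg_mul_neg] at h1
      rwa [mul_comm c a] at h1
    · rw [neg_mul_neg] at h2
      rwa [mul_comm b a] at h2
  · -- a>0, b<0, c>0 : negative slot b: use (a, c, b)
    obtain ⟨X, Y, Z, hnt', hE', h1, h2, h3⟩ := holzer_case a c b ha' hc' hb'
      hsa hsc hsb ⟨x, z, y, by tauto, by linear_combination hE⟩
    refine ⟨X, Z, Y, (tuple_iff X Z Y).mpr (by tauto), by linear_combination hE', ?_, ?_, ?_⟩
    · rwa [mul_comm c b] at h1
    · exact h3
    · exact h2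
  · -- a>0, b>0, c<0 : direct
    obtain ⟨X, Y, Z, hnt', hE', h1, h2, h3⟩ := holzer_case a b c ha' hb' hc'
      hsa hsb hsc ⟨x, y, z, hnt, hE⟩
    exact ⟨X, Y, Z, (tuple_iff X Y Z).mpr hnt', hE', h1, h2, h3⟩
  · -- a>0, b>0, c>0
    exact absurd (all_pos_trivial a b c x y z ha' hb' hc' hE) hnt
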